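/- Subject reduction for null assignment: if ρ,h,A ⊨ (Γ,Δ,Θ) then ρ[x ↦ null], h, A ⊨ (Γ[x ↦ ⊥], Δ, Θ). -/

import Mathlib

namespace SecureClones

abbrev Var := ℕ
abbrev Field := ℕ
abbrev Loc := ℕ
abbrev PolId := ℕ
abbrev Node := ℕ

/-- Values: locations or null. -/
inductive Val where
  | loc : Loc → Val
  | null : Val
deriving DecidableEq

abbrev Obj := Field → Val
abbrev Heap := Loc → Option Obj
abbrev Env := Var → Val

/-- An access path: a root variable followed by a sequence of fields. -/
structure Path where
  root : Var
  fields : List Field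
deriving DecidableEq

/-- Evaluation of a sequence of field dereferences from a value. -/
def evalFields (h : Heap) : Val → List Field → Option Val
  | v, [] => some v
  | Val.loc l, f :: fs =>
      match h l with
      | some o => evalFields h (o f) fs
      | none => none
  | Val.null, _ :: _ => none

/-- Concrete path evaluation ⟨ρ,h⟩π ⇓ v. -/
def EvalPath (ρ : Env) (h : Heap) (π : Path) (v : Val) : Prop :=
  evalFields h (ρ π.root) π.fields = some v

/-- Reachability in a heap: `Reach h v w` iff `w` is reachable from `v`
by a (possibly empty) sequence of field dereferences. -/
inductive Reach (h : Heap) : Val → Val → Prop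
  | refl (v) : Reach h v v
  | step {v : Val} {l : Loc} {o : Obj} (f : Field) :
      Reach h v (Val.loc l) → h l = some o → Reach h v (o f)

/-- A copy policy: a set of (policy identifier, deep field) pairs. -/
abbrev Pol := Set (PolId × Field)

/-- A field sequence follows only deep fields of a policy (w.r.t. policy map `Pm`). -/
inductive FieldsSat (Pm : PolId → Pol) : Pol → List Field → Prop
  | nil (τ) : FieldsSat Pm τ []
  | cons {τ : Pol} {fs : List Field} (X : PolId) (f : Field) :
      (X, f) ∈ τ → FieldsSat Pm (Pm X) fs → FieldsSat Pm τ (f :: fs)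

/-- ⊢ π : τ : the access path follows only deep fields of τ. -/
def PathSat (Pm : PolId → Pol) (π : Path) (τ : Pol) : Prop :=
  FieldsSat Pm τ π.fields

/-- Policy semantics ρ,h,x ⊨ τ. -/
def PolSem (Pm : PolId → Pol) (ρ : Env) (h : Heap) (x : Var) (τ : Pol) : Prop :=
  ∀ (π π' : Path) (l l' : Loc),
    π.root = x → π'.root ≠ x →
    PathSat Pm π τ →
    EvalPath ρ h π (Val.loc l) → EvalPath ρ h π' (Val.loc l') →
    l ≠ l'

/-- Base types of the type-and-effect system. -/
inductive BaseType where
  | node : Node → BaseType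
  | bot
  | topOut
  | top
deriving DecidableEq

abbrev Graph := Node → Option (Field → BaseType)

/-- A type (Γ,Δ,Θ). -/
structure Ty where
  Γ : Var → BaseType
  Δ : Graph
  Θ : Set Node

/-- Abstract evaluation of a field sequence from a base type, with ⊤, ⊤out as sinks. -/
def aevalFields (Δ : Graph) : BaseType → List Field → Option BaseType
  | t, [] => some t
  | BaseType.node n, f :: fs =>
      match Δ n with
      | some e => aevalFields Δ (e f) fs
      | none => none
  | BaseType.top, _ :: _ => some BaseType.top
  | BaseType.topOut, _ :: _ => some BaseType.topOut
  | BaseType.bot, _ :: _ => none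

/-- Abstract path evaluation [Γ,Δ]π ⇓ t. -/
def AEval (Γ : Var → BaseType) (Δ : Graph) (π : Path) (t : BaseType) : Prop :=
  aevalFields Δ (Γ π.root) π.fields = some t

/-- Auxiliary type interpretation [[v : t]]. -/
inductive AuxInterp (ρ : Env) (h : Heap) (A : Set Loc) (Γ : Var → BaseType) (Δ : Graph) :
    Val → BaseType → Prop
  | null (t) : AuxInterp ρ h A Γ Δ Val.null t
  | top (v) : AuxInterp ρ h A Γ Δ v BaseType.top
  | topOut (l : Loc) :
      (∀ l' : Loc, Reach h (Val.loc l) (Val.loc l') → l' ∉ A) →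
      AuxInterp ρ h A Γ Δ (Val.loc l) BaseType.topOut
  | node (l : Loc) (n : Node) :
      l ∈ A → (Δ n).isSome →
      (∀ π, EvalPath ρ h π (Val.loc l) → AEval Γ Δ π (BaseType.node n)) →
      AuxInterp ρ h A Γ Δ (Val.loc l) (BaseType.node n)

/-- Main type interpretation ρ,h,A ⊨ (Γ,Δ,Θ). -/
structure Interp (ρ : Env) (h : Heap) (A : Set Loc) (T : Ty) : Prop where
  paths : ∀ (π : Path) (t : BaseType) (v : Val),
    AEval T.Γ T.Δ π t → EvalPath ρ h π v → AuxInterp ρ h A T.Γ T.Δ v t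
  strong : ∀ n ∈ T.Θ, ∀ (π π' : Path) (l l' : Loc),
    AEval T.Γ T.Δ π (BaseType.node n) → AEval T.Γ T.Δ π' (BaseType.node n) →
    EvalPath ρ h π (Val.loc l) → EvalPath ρ h π' (Val.loc l') → l = l'

/-- Value sub-typing t ≤_σ t' (σ : Node → Option Node, none standing for ⊤). -/
inductive VSub (σ : Node → Option Node) : BaseType → BaseType → Prop
  | bot (t) : VSub σ BaseType.bot t
  | top {t : BaseType} : (∀ n, t ≠ BaseType.node n) → VSub σ t BaseType.top
  | topOut : VSub σ BaseType.topOut BaseType.topOut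
  | node {n n' : Node} : σ n = some n' → VSub σ (BaseType.node n) (BaseType.node n')
  | nodeTop {n : Node} : σ n = none → VSub σ (BaseType.node n) BaseType.top

/-- T₁ ⊑ T₂ via the fusion map σ. -/
structure SubtypeVia (T₁ T₂ : Ty) (σ : Node → Option Node) : Prop where
  st1 : ∀ n n', (T₁.Δ n).isSome → σ n = some n' → (T₂.Δ n').isSome
  st2 : ∀ (t₁ : BaseType) (π : Path), AEval T₁.Γ T₁.Δ π t₁ →
      ∃ t₂, VSub σ t₁ t₂ ∧ AEval T₂.Γ T₂.Δ π t₂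
  st3 : ∀ n₂ ∈ T₂.Θ, ∃ n₁ ∈ T₁.Θ,
      ∀ n, ((T₁.Δ n).isSome ∧ σ n = some n₂) ↔ n = n₁

/-- The sub-typing relation T₁ ⊑ T₂. -/
def TySub (T₁ T₂ : Ty) : Prop := ∃ σ, SubtypeVia T₁ T₂ σ

-- Successor base type of a policy node for field f: the node of the policy
-- governing f if f is deep, and ⊤ otherwise.
open Classical in
noncomputable def polEdge (τ : Pol) (f : Field) : BaseType :=
  if h : ∃ X, (X, f) ∈ τ then BaseType.node (h.choose + 1) else BaseType.top

/-- The graph part of Φ(τ): node 0 is the unfolded root n_τ, node X+1 is the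
node n'_X of policy identifier X. -/
noncomputable def PhiGraph (Pm : PolId → Pol) (τ : Pol) : Graph :=
  fun n =>
    match n with
    | 0 => some (polEdge τ)
    | m + 1 => some (polEdge (Pm m))

/-- The root node n_τ of Φ(τ). -/
def PhiRoot : Node := 0

/-- Heap update h[(l,f) ↦ v]. -/
def hupd (h : Heap) (l : Loc) (f : Field) (v : Val) : Heap :=
  fun l' => if l' = l then (h l).map (fun o => Function.update o f v) else h l'

/-- Graph update Δ[(n,f) ↦ t]. -/
def gupd (Δ : Graph) (n : Node) (f : Field) (t : BaseType) : Graph :=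
  fun m => if m = n then (Δ n).map (fun e => Function.update e f t) else Δ m


/-
A null variable evaluates no field path to anything but `null`, and a `⊥`-typed variable
abstractly evaluates no path to anything but `⊥`. So every path rooted at `x` evaluates to
`null` and is typed `⊥`, which `[[null : ⊥]]` satisfies; every path ending in a location or
typed by a node avoids `x`, where the updated state and type agree with the old ones.
-/

theorem evalFields_null_eq_some {h : Heap} {fs : List Field} {v : Val} :
    evalFields h Val.null fs = some v ↔ fs = [] ∧ v = Val.null := by
  cases fs <;> simp [evalFields, eq_comm]

theorem aevalFields_bot_eq_some {Δ : Graph} {fs : List Field} {t : BaseType} :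
    aevalFields Δ BaseType.bot fs = some t ↔ fs = [] ∧ t = BaseType.bot := by
  cases fs <;> simp [aevalFields, eq_comm]

section Update

variable {ρ : Env} {h : Heap} {Γ : Var → BaseType} {Δ : Graph} {x : Var} {π : Path}

theorem evalPath_update_of_root_ne (hπ : π.root ≠ x) (u v : Val) :
    EvalPath (Function.update ρ x u) h π v ↔ EvalPath ρ h π v := by
  simp only [EvalPath, Function.update_of_ne hπ]

theorem aEval_update_of_root_ne (hπ : π.root ≠ x) (s t : BaseType) :
    AEval (Function.update Γ x s) Δ π t ↔ AEval Γ Δ π t := by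
  simp only [AEval, Function.update_of_ne hπ]

theorem eq_null_of_evalPath_update_null {v : Val} (hπ : π.root = x)
    (hv : EvalPath (Function.update ρ x Val.null) h π v) : v = Val.null := by
  rw [EvalPath, hπ, Function.update_self] at hv
  exact (evalFields_null_eq_some.1 hv).2

theorem eq_bot_of_aEval_update_bot {t : BaseType} (hπ : π.root = x)
    (ht : AEval (Function.update Γ x BaseType.bot) Δ π t) : t = BaseType.bot := by
  rw [AEval, hπ, Function.update_self] at ht
  exact (aevalFields_bot_eq_some.1 ht).2

theorem root_ne_of_evalPath_update_null {l : Loc}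
    (hl : EvalPath (Function.update ρ x Val.null) h π (Val.loc l)) : π.root ≠ x :=
  fun hπ => Val.noConfusion (eq_null_of_evalPath_update_null hπ hl)

theorem root_ne_of_aEval_update_bot {n : Node}
    (hn : AEval (Function.update Γ x BaseType.bot) Δ π (BaseType.node n)) : π.root ≠ x :=
  fun hπ => BaseType.noConfusion (eq_bot_of_aEval_update_bot hπ hn)

end Update

theorem AuxInterp.update_null_bot {ρ : Env} {h : Heap} {A : Set Loc} {Γ : Var → BaseType}
    {Δ : Graph} {v : Val} {t : BaseType} (x : Var) (hv : AuxInterp ρ h A Γ Δ v t) :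
    AuxInterp (Function.update ρ x Val.null) h A (Function.update Γ x BaseType.bot) Δ v t := by
  cases hv with
  | null t => exact .null t
  | top v => exact .top v
  | topOut l hl => exact .topOut l hl
  | node l n hlA hn htyped =>
    refine .node l n hlA hn fun π hπ => ?_
    have hroot := root_ne_of_evalPath_update_null hπ
    exact (aEval_update_of_root_ne hroot _ _).2
      (htyped π ((evalPath_update_of_root_ne hroot _ _).1 hπ))

/-- Subject reduction for null assignment x := null. -/
theorem subject_reduction_null_assign
    (ρ : Env) (h : Heap) (A : Set Loc) (Γ : Var → BaseType) (Δ : Graph) (Θ : Set Node)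
    (x : Var) (hint : Interp ρ h A ⟨Γ, Δ, Θ⟩) :
    Interp (Function.update ρ x Val.null) h A ⟨Function.update Γ x BaseType.bot, Δ, Θ⟩ := by
  constructor
  · intro π t v ht hv
    by_cases hπ : π.root = x
    · rw [eq_null_of_evalPath_update_null hπ hv]
      exact .null t
    · exact (hint.paths π t v ((aEval_update_of_root_ne hπ _ _).1 ht)
        ((evalPath_update_of_root_ne hπ _ _).1 hv)).update_null_bot x
  · intro n hn π π' l l' ht ht' hl hl'
    have hπ := root_ne_of_aEval_update_bot ht
    have hπ' := root_ne_of_aEval_update_bot ht'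
    exact hint.strong n hn π π' l l' ((aEval_update_of_root_ne hπ _ _).1 ht)
      ((aEval_update_of_root_ne hπ' _ _).1 ht') ((evalPath_update_of_root_ne hπ _ _).1 hl)
      ((evalPath_update_of_root_ne hπ' _ _).1 hl')

end SecureClones
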